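/- arXiv:2406.18132 — 6 statements merged into one kernel-verified Lean document; each statement's English description precedes it below -/
import Mathlib

section
/- Let P = (x_1, …, x_n) be any finite list of n points in [0,1). Then every minimizer of the Kritzinger functional over [0,1) lies in Γ_n and is distinct from all points of P; that is, if y* ∈ [0,1) satisfies F(y*, P) ≤ F(y, P) for all y ∈ [0,1), then y* ∈ Γ_n and y* ≠ x_i for all i ∈ {1, …, n}. In particular, any sequence built greedily by repeatedly adding a minimizer of F consists of rational points with pairwise distinct new terms, regardless of the choice of the initial point(s). -/
set_option maxHeartbeats 1000000


/-- The Kritzinger functional of a list of `n` points `x` in `[0,1)`: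
`F(y, P) = (n+1)·y² − y − 2·∑ᵢ max(xᵢ, y)`. -/
noncomputable def kritzF (n : ℕ) (x : Fin n → ℝ) (y : ℝ) : ℝ :=
  ((n : ℝ) + 1) * y ^ 2 - y - 2 * ∑ i, max (x i) y

/-- `Γₙ = {(2i+1)/(2(n+1)) : i ∈ {0,…,n}}`. -/
def Gamma (n : ℕ) : Set ℝ :=
  {y | ∃ i : ℕ, i ≤ n ∧ y = (2 * (i : ℝ) + 1) / (2 * ((n : ℝ) + 1))}

private lemma kritz_eval (n : ℕ) (x : Fin n → ℝ) (y : ℝ) (S : Finset (Fin n))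
    (h1 : ∀ i ∈ S, x i ≤ y) (h2 : ∀ i ∉ S, y ≤ x i) :
    kritzF n x y = ((n : ℝ) + 1) * y ^ 2 - (2 * (S.card : ℝ) + 1) * y
      - 2 * ∑ i ∈ Sᶜ, x i := by
  unfold kritzF
  have hsum : ∑ i, max (x i) y = (S.card : ℝ) * y + ∑ i ∈ Sᶜ, x i := by
    rw [← Finset.sum_add_sum_compl S]
    congr 1
    · rw [Finset.sum_congr rfl (fun i hi => max_eq_right (h1 i hi))]
      simp [mul_comm]
    · exact Finset.sum_congr rfl fun i hi => max_eq_left (h2 i (Finset.mem_compl.mp hi))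
  rw [hsum]; ring

/-- Every minimizer of the Kritzinger functional over `[0,1)` lies in `Γₙ`
and differs from all points already in `P`. -/
theorem minimizer_mem_Gamma_and_ne (n : ℕ) (x : Fin n → ℝ)
    (hx : ∀ i, x i ∈ Set.Ico (0 : ℝ) 1)
    (ystar : ℝ) (hy : ystar ∈ Set.Ico (0 : ℝ) 1)
    (hmin : ∀ y ∈ Set.Ico (0 : ℝ) 1, kritzF n x ystar ≤ kritzF n x y) :
    ystar ∈ Gamma n ∧ ∀ i, ystar ≠ x i := by
  classical
  obtain ⟨hy0, hy1⟩ := hy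
  set S : Finset (Fin n) := Finset.univ.filter (fun i => x i ≤ ystar) with hSdef
  set B : Finset (Fin n) := Finset.univ.filter (fun i => x i < ystar) with hBdef
  clear_value S B
  have hBS : B ⊆ S := by
    intro i hi
    simp only [hSdef, hBdef, Finset.mem_filter, Finset.mem_univ, true_and] at hi ⊢
    exact le_of_lt hi
  have hkn : S.card ≤ n := by
    rw [hSdef]
    simpa using Finset.card_filter_le Finset.univ (fun i => x i ≤ ystar)
  have hjk : (B.card : ℝ) ≤ (S.card : ℝ) := by exact_mod_cast Finset.card_le_card hBS
  have hn1 : (0 : ℝ) < 2 * ((n : ℝ) + 1) := by positivity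
  have hkR : (S.card : ℝ) ≤ (n : ℝ) := by exact_mod_cast hkn
  -- evaluation at ystar using S
  have eS : kritzF n x ystar
      = ((n : ℝ) + 1) * ystar ^ 2 - (2 * (S.card : ℝ) + 1) * ystar - 2 * ∑ i ∈ Sᶜ, x i := by
    refine kritz_eval n x ystar S ?_ ?_
    · intro i hi
      simpa [hSdef, Finset.mem_filter] using hi
    · intro i hi
      simp only [hSdef, Finset.mem_filter, Finset.mem_univ, true_and, not_le] at hi
      exact le_of_lt hi
  -- evaluation at ystar using B
  have eB : kritzF n x ystar
      = ((n : ℝ) + 1) * ystar ^ 2 - (2 * (B.card : ℝ) + 1) * ystar - 2 * ∑ i ∈ Bᶜ, x i := by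
    refine kritz_eval n x ystar B ?_ ?_
    · intro i hi
      have : x i < ystar := by simpa [hBdef, Finset.mem_filter] using hi
      exact le_of_lt this
    · intro i hi
      simp only [hBdef, Finset.mem_filter, Finset.mem_univ, true_and, not_lt] at hi
      exact hi
  -- Right step: (2k+1)/(2(n+1)) ≤ ystar
  have hR : (2 * (S.card : ℝ) + 1) / (2 * ((n : ℝ) + 1)) ≤ ystar := by
    by_contra h
    push_neg at h
    set v : ℝ := (2 * (S.card : ℝ) + 1) / (2 * ((n : ℝ) + 1)) with hvdef
    have hv_eq : v * (2 * ((n : ℝ) + 1)) = 2 * (S.card : ℝ) + 1 :=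
      div_mul_cancel₀ _ (ne_of_gt hn1)
    have hv1 : v < 1 := by
      rw [hvdef, div_lt_one hn1]; linarith
    set m : ℝ := if h' : Sᶜ.Nonempty then Sᶜ.inf' h' x else 1 with hmdef
    have hm_le : ∀ i, i ∉ S → m ≤ x i := by
      intro i hi
      have hi' : i ∈ Sᶜ := Finset.mem_compl.mpr hi
      rw [hmdef, dif_pos ⟨i, hi'⟩]
      exact Finset.inf'_le x hi'
    have hm_gt : ystar < m := by
      rw [hmdef]
      split_ifs with h'
      · rw [Finset.lt_inf'_iff]
        intro i hi
        have : ¬ x i ≤ ystar := by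
          have := Finset.mem_compl.mp hi
          simpa [hSdef, Finset.mem_filter] using this
        linarith [not_le.mp this]
      · exact hy1
    set y : ℝ := (ystar + min v m) / 2 with hydef
    have hyg : ystar < y := by
      have : ystar < min v m := lt_min h hm_gt
      rw [hydef]; linarith
    have hyv : y < v := by
      have h1 : min v m ≤ v := min_le_left _ _
      have : ystar < min v m := lt_min h hm_gt
      rw [hydef]; linarith
    have hym : y < m := by
      have h1 : min v m ≤ m := min_le_right _ _
      have : ystar < min v m := lt_min h hm_gt
      rw [hydef]; linarith
    have hy_mem : y ∈ Set.Ico (0 : ℝ) 1 := ⟨by linarith, by linarith⟩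
    have eY : kritzF n x y
        = ((n : ℝ) + 1) * y ^ 2 - (2 * (S.card : ℝ) + 1) * y - 2 * ∑ i ∈ Sᶜ, x i := by
      refine kritz_eval n x y S ?_ ?_
      · intro i hi
        have : x i ≤ ystar := by simpa [hSdef, Finset.mem_filter] using hi
        linarith
      · intro i hi
        exact le_trans (le_of_lt hym) (hm_le i hi)
    clear_value v m y
    have hle := hmin y hy_mem
    rw [eS, eY] at hle
    have key : ((n : ℝ) + 1) * (y + ystar) < 2 * (S.card : ℝ) + 1 := by
      nlinarith [hv_eq, hyv, h, hn1]
    nlinarith [hle, mul_pos (sub_pos.mpr hyg) (sub_pos.mpr key)]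
  -- Left step: ystar ≤ (2j+1)/(2(n+1))
  have hL : ystar ≤ (2 * (B.card : ℝ) + 1) / (2 * ((n : ℝ) + 1)) := by
    by_contra h
    push_neg at h
    set w : ℝ := (2 * (B.card : ℝ) + 1) / (2 * ((n : ℝ) + 1)) with hwdef
    have hw_eq : w * (2 * ((n : ℝ) + 1)) = 2 * (B.card : ℝ) + 1 :=
      div_mul_cancel₀ _ (ne_of_gt hn1)
    have hw0 : 0 < w := by
      rw [hwdef]
      apply div_pos _ hn1
      positivity
    set M : ℝ := if h' : B.Nonempty then B.sup' h' x else 0 with hMdef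
    have hM_ge : ∀ i, i ∈ B → x i ≤ M := by
      intro i hi
      rw [hMdef, dif_pos ⟨i, hi⟩]
      exact Finset.le_sup' x hi
    have hM_lt : M < ystar := by
      rw [hMdef]
      split_ifs with h'
      · rw [Finset.sup'_lt_iff]
        intro i hi
        simpa [hBdef, Finset.mem_filter] using hi
      · -- B empty: need 0 < ystar, and ystar > w > 0
        linarith
    set y : ℝ := (ystar + max w M) / 2 with hydef
    have hyl : y < ystar := by
      have : max w M < ystar := max_lt h hM_lt
      rw [hydef]; linarith
    have hyw : w < y := by
      have h1 : w ≤ max w M := le_max_left _ _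
      have : max w M < ystar := max_lt h hM_lt
      rw [hydef]; linarith
    have hyM : M < y := by
      have h1 : M ≤ max w M := le_max_right _ _
      have : max w M < ystar := max_lt h hM_lt
      rw [hydef]; linarith
    have hy_mem : y ∈ Set.Ico (0 : ℝ) 1 := ⟨by linarith, by linarith⟩
    have eY : kritzF n x y
        = ((n : ℝ) + 1) * y ^ 2 - (2 * (B.card : ℝ) + 1) * y - 2 * ∑ i ∈ Bᶜ, x i := by
      refine kritz_eval n x y B ?_ ?_
      · intro i hi
        have := hM_ge i hi
        linarith
      · intro i hi
        have : ystar ≤ x i := by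
          simpa [hBdef, Finset.mem_filter, not_lt] using hi
        linarith
    clear_value w M y
    have hle := hmin y hy_mem
    rw [eB, eY] at hle
    have key : 2 * (B.card : ℝ) + 1 < ((n : ℝ) + 1) * (ystar + y) := by
      nlinarith [hw_eq, hyw, h, hn1]
    nlinarith [hle, mul_pos (sub_pos.mpr hyl) (sub_pos.mpr key)]
  -- combine
  have hkj : (S.card : ℝ) = (B.card : ℝ) := by
    have h1 : (2 * (S.card : ℝ) + 1) / (2 * ((n : ℝ) + 1)) ≤ (2 * (B.card : ℝ) + 1) / (2 * ((n : ℝ) + 1)) :=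
      le_trans hR hL
    have h2 : 2 * (S.card : ℝ) + 1 ≤ 2 * (B.card : ℝ) + 1 :=
      (div_le_div_iff_of_pos_right hn1).mp h1
    linarith
  have hcard : S.card = B.card := by exact_mod_cast hkj
  have hSB : B = S := Finset.eq_of_subset_of_card_le hBS (le_of_eq hcard)
  have hyval : ystar = (2 * (S.card : ℝ) + 1) / (2 * ((n : ℝ) + 1)) := by
    rw [hkj] at hR
    have := le_antisymm hL hR
    rw [hkj]; linarith [le_antisymm hR hL]
  constructor
  · exact ⟨S.card, hkn, hyval⟩
  · intro i hne
    have hiS : i ∈ S := by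
      simp only [hSdef, Finset.mem_filter, Finset.mem_univ, true_and]
      exact le_of_eq hne.symm
    rw [← hSB] at hiS
    have : x i < ystar := by
      simpa [hBdef, Finset.mem_filter] using hiS
    rw [hne] at this
    exact lt_irrefl _ this
end

section
/- For every finite list of points P = (x_1, …, x_n) in [0,1), the Kritzinger functional F(·, P) attains its minimum on the half-open interval [0,1): there exists y* ∈ [0,1) such that F(y*, P) ≤ F(y, P) for all y ∈ [0,1). -/
/-- The Kritzinger functional attains its minimum on the half-open interval `[0,1)`. -/
theorem kritzF_attains_min (n : ℕ) (x : Fin n → ℝ)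
    (hx : ∀ i, x i ∈ Set.Ico (0 : ℝ) 1) :
    ∃ ystar ∈ Set.Ico (0 : ℝ) 1, ∀ y ∈ Set.Ico (0 : ℝ) 1,
      kritzF n x ystar ≤ kritzF n x y := by
  have hcont : Continuous (kritzF n x) := by
    unfold kritzF
    fun_prop
  obtain ⟨ystar, hmem, hmin⟩ :=
    (isCompact_Icc (a := (0:ℝ)) (b := 1)).exists_isMinOn ⟨0, by norm_num⟩
      hcont.continuousOn
  have key : ∃ y0 ∈ Set.Ico (0:ℝ) 1, kritzF n x y0 < kritzF n x 1 := by
    set c : ℝ := (2*n+1)/(2*n+2) with hc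
    have hc0 : 0 ≤ c := by positivity
    have hc1 : c < 1 := by
      rw [hc, div_lt_one (by positivity)]; linarith
    have hnc : (n:ℝ) < ((n:ℝ)+1)*c := by
      have h2 : ((n:ℝ)+1)*c = (2*n+1)/2 := by
        rw [hc]; field_simp
      rw [h2]; linarith
    obtain ⟨y0, hy00, hy01, hxy0, hcy0⟩ :
        ∃ y0, 0 ≤ y0 ∧ y0 < 1 ∧ (∀ i, x i ≤ y0) ∧ c ≤ y0 := by
      rcases isEmpty_or_nonempty (Fin n) with h | h
      · exact ⟨c, hc0, hc1, fun i => isEmptyElim i, le_rfl⟩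
      · obtain ⟨i0, hi0⟩ := Finite.exists_max x
        exact ⟨max c (x i0), le_trans hc0 (le_max_left _ _),
          max_lt hc1 (hx i0).2,
          fun i => le_trans (hi0 i) (le_max_right _ _), le_max_left _ _⟩
    refine ⟨y0, ⟨hy00, hy01⟩, ?_⟩
    have h1 : kritzF n x y0 = ((n:ℝ)+1)*y0^2 - y0 - 2*((n:ℝ)*y0) := by
      unfold kritzF
      rw [Finset.sum_congr rfl fun i _ => max_eq_right (hxy0 i)]
      simp [Finset.sum_const, mul_comm]
    have h2 : kritzF n x 1 = ((n:ℝ)+1) - 1 - 2*(n:ℝ) := by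
      unfold kritzF
      rw [Finset.sum_congr rfl fun i _ => max_eq_right (le_of_lt (hx i).2)]
      simp
    rw [h1, h2]
    have hnc' : (n:ℝ) < ((n:ℝ)+1)*y0 := by
      refine lt_of_lt_of_le hnc ?_
      have : (0:ℝ) ≤ (n:ℝ)+1 := by positivity
      nlinarith
    nlinarith [mul_pos (sub_pos.mpr hnc') (sub_pos.mpr hy01)]
  obtain ⟨y0, hy0mem, hy0lt⟩ := key
  have hne : ystar ≠ 1 := by
    intro h
    have := hmin (Set.mem_of_mem_of_subset hy0mem Set.Ico_subset_Icc_self)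
    rw [h] at this
    exact absurd this (not_le.mpr hy0lt)
  exact ⟨ystar, ⟨hmem.1, lt_of_le_of_ne hmem.2 hne⟩,
    fun y hy => hmin (Set.mem_of_mem_of_subset hy Set.Ico_subset_Icc_self)⟩
end

section
/- Let P = (x_1, …, x_n) be a finite list of points in [0,1). Then for every y ∈ [0,1), the squared L2 star discrepancy of the extended list (x_1, …, x_n, y) satisfies the exact identity (n+1)²·d₂*((x_1, …, x_n, y))² = F(y, P) + n + (n+1)²/3 − (n+1)·∑_{i=1}^n (1 − x_i²) + ∑_{i=1}^n ∑_{j=1}^n (1 − max(x_i, x_j)). In particular, up to an additive constant depending only on P, the functional F(y, P) is the contribution of the single point y to Warnock's formula in dimension one. -/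
open MeasureTheory

/-- The squared L2 star discrepancy of a list of `m` points of `[0,1)`:
`∫₀¹ (A(t,Q)/m − t)² dt` where `A(t,Q) = #{i : qᵢ < t}`. -/
noncomputable def d2sq (m : ℕ) (Q : Fin m → ℝ) : ℝ :=
  ∫ t in (0 : ℝ)..1,
    (((Finset.univ.filter fun i => Q i < t).card : ℝ) / m - t) ^ 2

lemma indInt (q : ℝ) (f : ℝ → ℝ) (hf : Continuous f) :
    IntervalIntegrable (fun t => if q < t then f t else 0) volume 0 1 := by
  have h : (fun t => if q < t then f t else 0) = (Set.Ioi q).indicator f := by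
    funext t; simp [Set.indicator_apply, Set.mem_Ioi]
  rw [h, intervalIntegrable_iff]
  exact ((intervalIntegrable_iff.1 (hf.intervalIntegrable 0 1))).indicator measurableSet_Ioi

lemma indVal (q : ℝ) (hq0 : 0 ≤ q) (hq1 : q ≤ 1) (f : ℝ → ℝ) (hf : Continuous f) :
    ∫ t in (0:ℝ)..1, (if q < t then f t else 0) = ∫ t in q..1, f t := by
  have hi1 : IntervalIntegrable (fun t => if q < t then f t else 0) volume 0 q :=
    (indInt q f hf).mono_set (by rw [Set.uIcc_of_le hq0, Set.uIcc_of_le (by linarith : (0:ℝ) ≤ 1)]; exact Set.Icc_subset_Icc le_rfl hq1)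
  have hi2 : IntervalIntegrable (fun t => if q < t then f t else 0) volume q 1 :=
    (indInt q f hf).mono_set (by rw [Set.uIcc_of_le hq1, Set.uIcc_of_le (by linarith : (0:ℝ) ≤ 1)]; exact Set.Icc_subset_Icc hq0 le_rfl)
  rw [← intervalIntegral.integral_add_adjacent_intervals hi1 hi2]
  have h1 : ∫ t in (0:ℝ)..q, (if q < t then f t else 0) = 0 := by
    rw [intervalIntegral.integral_congr (g := fun _ => 0) ?_, intervalIntegral.integral_zero]
    intro t ht
    rw [Set.uIcc_of_le hq0] at ht
    exact if_neg (not_lt.2 ht.2)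
  have h2 : ∫ t in q..(1:ℝ), (if q < t then f t else 0) = ∫ t in q..1, f t := by
    apply intervalIntegral.integral_congr_ae
    filter_upwards with t ht
    rw [Set.uIoc_of_le hq1] at ht
    exact if_pos ht.1
  rw [h1, h2, zero_add]


lemma sumInt {m : ℕ} (g : Fin m → ℝ → ℝ)
    (h : ∀ i, IntervalIntegrable (g i) volume 0 1) :
    IntervalIntegrable (fun t => ∑ i, g i t) volume 0 1 := by
  have he : (fun t => ∑ i, g i t) = ∑ i, g i := by
    funext t; simp [Finset.sum_apply]
  rw [he]; exact IntervalIntegrable.sum _ fun i _ => h i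

lemma combo (A B : ℝ → ℝ) (hA : IntervalIntegrable A volume 0 1)
    (hB : IntervalIntegrable B volume 0 1) (a b : ℝ) :
    ∫ t in (0:ℝ)..1, (a * A t - b * B t + t^2)
    = a * (∫ t in (0:ℝ)..1, A t) - b * (∫ t in (0:ℝ)..1, B t) + 1/3 := by
  rw [intervalIntegral.integral_add ((hA.const_mul a).sub (hB.const_mul b))
        ((intervalIntegral.intervalIntegrable_pow 2)),
      intervalIntegral.integral_sub (hA.const_mul a) (hB.const_mul b),
      intervalIntegral.integral_const_mul, intervalIntegral.integral_const_mul,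
      integral_pow]
  norm_num

set_option maxHeartbeats 1000000 in
lemma d2sq_eq (m : ℕ) (hm : 0 < m) (Q : Fin m → ℝ) (hQ : ∀ i, Q i ∈ Set.Ico (0:ℝ) 1) :
    (∫ t in (0:ℝ)..1,
      (((Finset.univ.filter fun i => Q i < t).card : ℝ) / m - t) ^ 2)
    = (1/(m:ℝ)^2) * ∑ i, ∑ j, (1 - max (Q i) (Q j))
      - (2/(m:ℝ)) * ∑ i, (1 - (Q i)^2)/2 + 1/3 := by
  have hm' : (m:ℝ) ≠ 0 := Nat.cast_ne_zero.2 hm.ne'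
  have hG : ∀ t : ℝ,
      (((Finset.univ.filter fun i => Q i < t).card : ℝ) / m - t) ^ 2
      = (1/(m:ℝ)^2) * ∑ i, ∑ j, (if max (Q i) (Q j) < t then (1:ℝ) else 0)
        - (2/(m:ℝ)) * ∑ i, (if Q i < t then t else 0) + t^2 := by
    intro t
    have hc : (((Finset.univ.filter fun i => Q i < t).card : ℝ))
        = ∑ i, (if Q i < t then (1:ℝ) else 0) := by
      rw [Finset.card_filter]; push_cast; rfl
    have hsq : (∑ i, (if Q i < t then (1:ℝ) else 0))^2
        = ∑ i, ∑ j, (if max (Q i) (Q j) < t then (1:ℝ) else 0) := by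
      rw [sq, Finset.sum_mul_sum]
      refine Finset.sum_congr rfl fun i _ => Finset.sum_congr rfl fun j _ => ?_
      by_cases hi : Q i < t <;> by_cases hj : Q j < t <;>
        simp [hi, hj, max_lt_iff]
    have hts : ∑ i, (if Q i < t then t else 0)
        = t * ∑ i, (if Q i < t then (1:ℝ) else 0) := by
      rw [Finset.mul_sum]
      refine Finset.sum_congr rfl fun i _ => ?_
      by_cases hi : Q i < t <;> simp [hi]
    rw [hc, hts, ← hsq]
    field_simp
    ring
  rw [intervalIntegral.integral_congr (g := fun t =>
      (1/(m:ℝ)^2) * ∑ i, ∑ j, (if max (Q i) (Q j) < t then (1:ℝ) else 0)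
        - (2/(m:ℝ)) * ∑ i, (if Q i < t then t else 0) + t^2)
      (fun t _ => hG t)]
  have hiA : IntervalIntegrable
      (fun t => ∑ i, ∑ j, (if max (Q i) (Q j) < t then (1:ℝ) else 0)) volume 0 1 :=
    sumInt _ fun i => sumInt _ fun j => indInt _ (fun _ => 1) continuous_const
  have hiB : IntervalIntegrable (fun t => ∑ i, (if Q i < t then t else 0)) volume 0 1 :=
    sumInt _ fun i => indInt _ (fun s => s) continuous_id'
  rw [combo _ _ hiA hiB (1/(m:ℝ)^2) (2/(m:ℝ))]
  have hIA : (∫ t in (0:ℝ)..1, ∑ i, ∑ j, (if max (Q i) (Q j) < t then (1:ℝ) else 0))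
      = ∑ i, ∑ j, (1 - max (Q i) (Q j)) := by
    rw [intervalIntegral.integral_finset_sum
      (f := fun (i : Fin m) t => ∑ j, (if max (Q i) (Q j) < t then (1:ℝ) else 0))
      (fun i _ => sumInt _ fun j => indInt _ (fun _ => 1) continuous_const)]
    refine Finset.sum_congr rfl fun i _ => ?_
    rw [intervalIntegral.integral_finset_sum
      (f := fun (j : Fin m) t => (if max (Q i) (Q j) < t then (1:ℝ) else 0))
      (fun j _ => indInt _ (fun _ => 1) continuous_const)]
    refine Finset.sum_congr rfl fun j _ => ?_
    have h0 : 0 ≤ max (Q i) (Q j) := le_max_of_le_left (hQ i).1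
    have h1 : max (Q i) (Q j) ≤ 1 := max_le (hQ i).2.le (hQ j).2.le
    rw [indVal _ h0 h1 (fun _ => 1) continuous_const]
    simp
  have hIB : (∫ t in (0:ℝ)..1, ∑ i, (if Q i < t then t else 0))
      = ∑ i, (1 - (Q i)^2)/2 := by
    rw [intervalIntegral.integral_finset_sum
      (f := fun (i : Fin m) t => if Q i < t then t else 0)
      (fun i _ => indInt _ (fun s => s) continuous_id')]
    refine Finset.sum_congr rfl fun i _ => ?_
    rw [indVal _ (hQ i).1 (hQ i).2.le (fun s => s) continuous_id',
      integral_id]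
    ring
  rw [hIA, hIB]


/-- Exact identity relating the squared L2 star discrepancy of the extended list
`(x₁, …, xₙ, y)` to the Kritzinger functional `F(y, P)`. -/
theorem d2sq_snoc_eq_kritzF (n : ℕ) (x : Fin n → ℝ)
    (hx : ∀ i, x i ∈ Set.Ico (0 : ℝ) 1) (y : ℝ) (hy : y ∈ Set.Ico (0 : ℝ) 1) :
    ((n : ℝ) + 1) ^ 2 * d2sq (n + 1) (Fin.snoc x y) =
      kritzF n x y + n + ((n : ℝ) + 1) ^ 2 / 3
        - ((n : ℝ) + 1) * ∑ i, (1 - x i ^ 2)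
        + ∑ i, ∑ j, (1 - max (x i) (x j)) := by
  have hQ : ∀ i : Fin (n+1), (Fin.snoc x y : Fin (n+1) → ℝ) i ∈ Set.Ico (0:ℝ) 1 := by
    intro i
    refine Fin.lastCases ?_ ?_ i
    · simpa using hy
    · intro j; simpa using hx j
  have hd : d2sq (n + 1) (Fin.snoc x y)
      = (1/((n+1:ℕ):ℝ)^2) * ∑ i, ∑ j, (1 - max ((Fin.snoc x y : Fin (n+1) → ℝ) i) ((Fin.snoc x y : Fin (n+1) → ℝ) j))
        - (2/((n+1:ℕ):ℝ)) * ∑ i, (1 - ((Fin.snoc x y : Fin (n+1) → ℝ) i)^2)/2 + 1/3 :=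
    d2sq_eq (n+1) (Nat.succ_pos n) (Fin.snoc x y) hQ
  have inner : ∀ a : ℝ, ∑ j : Fin (n+1), (1 - max a ((Fin.snoc x y : Fin (n+1) → ℝ) j))
      = ∑ j, (1 - max a (x j)) + (1 - max a y) := by
    intro a
    rw [Fin.sum_univ_castSucc]
    simp
  have hs2 : ∑ i : Fin (n+1), ∑ j : Fin (n+1),
        (1 - max ((Fin.snoc x y : Fin (n+1) → ℝ) i) ((Fin.snoc x y : Fin (n+1) → ℝ) j))
      = ∑ i, ∑ j, (1 - max (x i) (x j)) + (∑ i, (1 - max (x i) y))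
        + ((∑ j, (1 - max (x j) y)) + (1 - y)) := by
    rw [Fin.sum_univ_castSucc]
    simp only [Fin.snoc_castSucc, Fin.snoc_last, inner]
    rw [Finset.sum_add_distrib]
    have hcomm : ∑ j, (1 - max y (x j)) = ∑ j, (1 - max (x j) y) :=
      Finset.sum_congr rfl fun j _ => by rw [max_comm]
    rw [hcomm, max_self]
  have hs1 : ∑ i : Fin (n+1), (1 - (Fin.snoc x y : Fin (n+1) → ℝ) i^2)/2
      = (∑ i, (1 - x i^2))/2 + (1-y^2)/2 := by
    rw [Fin.sum_univ_castSucc, Finset.sum_div]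
    simp
  have hmax : ∑ i, (1 - max (x i) y) = (n:ℝ) - ∑ i, max (x i) y := by
    rw [Finset.sum_sub_distrib]
    simp
  rw [hd, hs2, hs1, hmax, kritzF]
  have hm : ((n:ℝ)+1) ≠ 0 := by positivity
  push_cast
  field_simp
  ring
end

section
/- (Warnock's formula.) Let d ≥ 1 and let P = (x_1, …, x_n) be a finite list of points in [0,1)^d, writing x_{i,k} for the k-th coordinate of x_i. Then the squared L2 star discrepancy of P satisfies d₂*(P)² = 1/3^d − (2^{1−d}/n)·∑_{i=1}^n ∏_{k=1}^d (1 − x_{i,k}²) + (1/n²)·∑_{i=1}^n ∑_{j=1}^n ∏_{k=1}^d (1 − max(x_{i,k}, x_{j,k})). -/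
open MeasureTheory Set


noncomputable def gg (m t : ℝ) : ℝ := if m < t then 1 else 0

lemma gg_meas (m : ℝ) : Measurable (gg m) :=
  Measurable.ite measurableSet_Ioi measurable_const measurable_const

lemma gg_mul (a b t : ℝ) : gg a t * gg b t = gg (max a b) t := by
  unfold gg
  by_cases ha : a < t <;> by_cases hb : b < t <;> simp [ha, hb, max_lt_iff]

lemma gg_bound (m t : ℝ) : ‖gg m t‖ ≤ 1 := by
  unfold gg; split <;> simp

-- integrability of the three component functions (indicator on Icc)
lemma intg1 (m : ℝ) : Integrable ((Icc (0:ℝ) 1).indicator (gg m)) := by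
  rw [integrable_indicator_iff measurableSet_Icc]
  exact Measure.integrableOn_of_bounded (by simp) (gg_meas m).aestronglyMeasurable
    (Filter.Eventually.of_forall fun t => gg_bound m t)

lemma intg2 (m : ℝ) : Integrable ((Icc (0:ℝ) 1).indicator (fun t => t * gg m t)) := by
  rw [integrable_indicator_iff measurableSet_Icc]
  refine Measure.integrableOn_of_bounded (M := 1) (by simp)
    (measurable_id.mul (gg_meas m)).aestronglyMeasurable ?_
  filter_upwards [ae_restrict_mem measurableSet_Icc] with t ht
  have h0 := ht.1; have h1 := ht.2
  have := gg_bound m t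
  rw [Real.norm_eq_abs] at *
  calc |t * gg m t| = |t| * |gg m t| := abs_mul _ _
    _ ≤ 1 * 1 := by
        apply mul_le_mul _ this (abs_nonneg _) zero_le_one
        rw [abs_of_nonneg h0]; exact h1
    _ = 1 := by ring

lemma intg3 : Integrable ((Icc (0:ℝ) 1).indicator (fun t : ℝ => t ^ 2)) := by
  rw [integrable_indicator_iff measurableSet_Icc]
  exact (continuous_pow 2).continuousOn.integrableOn_Icc

-- values of the three single-variable integrals
lemma int1 {m : ℝ} (hm : m ∈ Ico (0:ℝ) 1) :
    ∫ t, (Icc (0:ℝ) 1).indicator (gg m) t = 1 - m := by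
  rw [integral_indicator measurableSet_Icc]
  have : ∀ t, gg m t = (Ioi m).indicator (fun _ => (1:ℝ)) t := by
    intro t; unfold gg; by_cases h : m < t <;> simp [h]
  simp_rw [this]
  rw [integral_indicator measurableSet_Ioi, Measure.restrict_restrict measurableSet_Ioi]
  have hset : Ioi m ∩ Icc (0:ℝ) 1 = Ioc m 1 := by
    ext t; constructor
    · rintro ⟨h1, h2, h3⟩; exact ⟨h1, h3⟩
    · rintro ⟨h1, h2⟩; exact ⟨h1, le_trans hm.1 h1.le, h2⟩
  rw [hset]
  simp [Real.volume_Ioc, ENNReal.toReal_ofReal (by linarith [hm.2] : (0:ℝ) ≤ 1 - m), hm.2.le]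

lemma int2 {m : ℝ} (hm : m ∈ Ico (0:ℝ) 1) :
    ∫ t, (Icc (0:ℝ) 1).indicator (fun t => t * gg m t) t = (1 - m ^ 2) / 2 := by
  rw [integral_indicator measurableSet_Icc]
  have : ∀ t, t * gg m t = (Ioi m).indicator (fun t => t) t := by
    intro t; unfold gg; by_cases h : m < t <;> simp [h]
  simp_rw [this]
  rw [integral_indicator measurableSet_Ioi, Measure.restrict_restrict measurableSet_Ioi]
  have hset : Ioi m ∩ Icc (0:ℝ) 1 = Ioc m 1 := by
    ext t; constructor
    · rintro ⟨h1, h2, h3⟩; exact ⟨h1, h3⟩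
    · rintro ⟨h1, h2⟩; exact ⟨h1, le_trans hm.1 h1.le, h2⟩
  rw [hset, ← intervalIntegral.integral_of_le hm.2.le, integral_id]
  ring

lemma int3 : ∫ t, (Icc (0:ℝ) 1).indicator (fun t : ℝ => t ^ 2) t = 1 / 3 := by
  rw [integral_indicator measurableSet_Icc, integral_Icc_eq_integral_Ioc,
    ← intervalIntegral.integral_of_le (by norm_num : (0:ℝ) ≤ 1), integral_pow]
  norm_num

lemma pointwise (d n : ℕ) (hn : 1 ≤ n) (x : Fin n → Fin d → ℝ) (q : Fin d → ℝ) :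
    (Set.univ.pi fun _ : Fin d => Icc (0:ℝ) 1).indicator
      (fun q => (((Finset.univ.filter fun i => ∀ k, x i k < q k).card : ℝ) / n - ∏ k, q k) ^ 2) q
    = 1 / (n:ℝ)^2 * ∑ i, ∑ j, ∏ k, (Icc (0:ℝ) 1).indicator (gg (max (x i k) (x j k))) (q k)
      - 2 / n * ∑ i, ∏ k, (Icc (0:ℝ) 1).indicator (fun t => t * gg (x i k) t) (q k)
      + ∏ k, (Icc (0:ℝ) 1).indicator (fun t : ℝ => t ^ 2) (q k) := by
  by_cases hq : q ∈ Set.univ.pi fun _ : Fin d => Icc (0:ℝ) 1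
  · rw [Set.indicator_of_mem hq]
    have hq' : ∀ k, q k ∈ Icc (0:ℝ) 1 := fun k => hq k (Set.mem_univ k)
    have hco : ∀ (f : Fin d → ℝ → ℝ),
        ∏ k, (Icc (0:ℝ) 1).indicator (f k) (q k) = ∏ k, f k (q k) := fun f =>
      Finset.prod_congr rfl fun k _ => Set.indicator_of_mem (hq' k) _
    simp only [hco]
    have hcard : ((Finset.univ.filter fun i => ∀ k, x i k < q k).card : ℝ)
        = ∑ i, ∏ k, gg (x i k) (q k) := by
      rw [Finset.card_filter]
      push_cast
      refine Finset.sum_congr rfl fun i _ => ?_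
      simp [gg, Finset.prod_boole]
    rw [hcard]
    have h1 : ∀ i j : Fin n, ∏ k, gg (max (x i k) (x j k)) (q k)
        = (∏ k, gg (x i k) (q k)) * ∏ k, gg (x j k) (q k) := by
      intro i j
      rw [← Finset.prod_mul_distrib]
      exact Finset.prod_congr rfl fun k _ => (gg_mul _ _ _).symm
    have h2 : ∀ i : Fin n, ∏ k, (q k * gg (x i k) (q k))
        = (∏ k, q k) * ∏ k, gg (x i k) (q k) := fun i => Finset.prod_mul_distrib
    simp_rw [h1, h2, Finset.prod_pow]
    rw [← Finset.sum_mul_sum]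
    rw [← Finset.mul_sum]
    have hn0 : (n:ℝ) ≠ 0 := Nat.cast_ne_zero.mpr (by omega)
    field_simp
    ring
  · rw [Set.indicator_of_notMem hq]
    rw [Set.mem_univ_pi] at hq
    push_neg at hq
    obtain ⟨k0, hk0⟩ := hq
    have z : ∀ (f : Fin d → ℝ → ℝ), ∏ k, (Icc (0:ℝ) 1).indicator (f k) (q k) = 0 := fun f =>
      Finset.prod_eq_zero (Finset.mem_univ k0) (Set.indicator_of_notMem hk0 _)
    simp [z, fun i : Fin n => Finset.sum_congr rfl
      fun j (_ : j ∈ Finset.univ) => z fun k => gg (max (x i k) (x j k))]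


/-- The squared L2 star discrepancy of a list of `n` points of `[0,1)^d`:
`∫_{[0,1]^d} (A(q,P)/n − ∏ₖ qₖ)² dq` where `A(q,P) = #{i : ∀ k, x_{i,k} < qₖ}`. -/
noncomputable def d2sqD (d n : ℕ) (x : Fin n → Fin d → ℝ) : ℝ :=
  ∫ q in Set.univ.pi fun _ : Fin d => Set.Icc (0 : ℝ) 1,
    (((Finset.univ.filter fun i => ∀ k, x i k < q k).card : ℝ) / n - ∏ k, q k) ^ 2

/-- Warnock's formula for the squared L2 star discrepancy. -/
theorem warnock_formula (d n : ℕ) (hd : 1 ≤ d) (hn : 1 ≤ n)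
    (x : Fin n → Fin d → ℝ) (hx : ∀ i k, x i k ∈ Set.Ico (0 : ℝ) 1) :
    d2sqD d n x = 1 / 3 ^ d
      - (2 : ℝ) ^ ((1 : ℤ) - d) / n * ∑ i, ∏ k, (1 - x i k ^ 2)
      + 1 / (n : ℝ) ^ 2 * ∑ i, ∑ j, ∏ k, (1 - max (x i k) (x j k)) := by
  have hmax : ∀ i j : Fin n, ∀ k, max (x i k) (x j k) ∈ Ico (0:ℝ) 1 := fun i j k =>
    ⟨(hx i k).1.trans (le_max_left _ _), max_lt (hx i k).2 (hx j k).2⟩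
  have hF : ∀ i j : Fin n, Integrable
      (fun q : Fin d → ℝ => ∏ k, (Icc (0:ℝ) 1).indicator (gg (max (x i k) (x j k))) (q k)) :=
    fun i j => Integrable.fintype_prod (f := fun k => (Icc (0:ℝ) 1).indicator
      (gg (max (x i k) (x j k)))) fun k => intg1 _
  have hG : ∀ i : Fin n, Integrable
      (fun q : Fin d → ℝ => ∏ k, (Icc (0:ℝ) 1).indicator (fun t => t * gg (x i k) t) (q k)) :=
    fun i => Integrable.fintype_prod (f := fun k => (Icc (0:ℝ) 1).indicator
      (fun t => t * gg (x i k) t)) fun k => intg2 _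
  have hH : Integrable (fun q : Fin d → ℝ => ∏ k, (Icc (0:ℝ) 1).indicator
      (fun t : ℝ => t ^ 2) (q k)) :=
    Integrable.fintype_prod (f := fun _ => (Icc (0:ℝ) 1).indicator (fun t : ℝ => t ^ 2))
      fun k => intg3
  have hA : Integrable (fun q : Fin d → ℝ => 1 / (n:ℝ)^2 * ∑ i, ∑ j,
      ∏ k, (Icc (0:ℝ) 1).indicator (gg (max (x i k) (x j k))) (q k)) :=
    (integrable_finset_sum _ fun i _ => integrable_finset_sum _ fun j _ => hF i j).const_mul _
  have hB : Integrable (fun q : Fin d → ℝ => 2 / (n:ℝ) * ∑ i,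
      ∏ k, (Icc (0:ℝ) 1).indicator (fun t => t * gg (x i k) t) (q k)) :=
    (integrable_finset_sum _ fun i _ => hG i).const_mul _
  have hAB : Integrable (fun q : Fin d → ℝ =>
      1 / (n:ℝ)^2 * (∑ i, ∑ j, ∏ k, (Icc (0:ℝ) 1).indicator (gg (max (x i k) (x j k))) (q k))
      - 2 / (n:ℝ) * ∑ i, ∏ k, (Icc (0:ℝ) 1).indicator (fun t => t * gg (x i k) t) (q k)) :=
    hA.sub hB
  rw [d2sqD, ← integral_indicator (MeasurableSet.univ_pi fun _ => measurableSet_Icc)]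
  simp_rw [pointwise d n hn x]
  rw [integral_add hAB hH, integral_sub hA hB, integral_const_mul, integral_const_mul,
    integral_finset_sum _ fun i _ => integrable_finset_sum _ fun j _ => hF i j,
    integral_finset_sum _ fun i _ => hG i]
  simp_rw [fun i : Fin n => integral_finset_sum (μ := (volume : Measure (Fin d → ℝ)))
    Finset.univ fun j (_ : j ∈ Finset.univ) => hF i j]
  have eF : ∀ i j : Fin n, (∫ q : Fin d → ℝ,
      ∏ k, (Icc (0:ℝ) 1).indicator (gg (max (x i k) (x j k))) (q k))
      = ∏ k, (1 - max (x i k) (x j k)) := by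
    intro i j
    rw [integral_fintype_prod_volume_eq_prod (ι := Fin d)
      (f := fun k => (Icc (0:ℝ) 1).indicator (gg (max (x i k) (x j k))))]
    exact Finset.prod_congr rfl fun k _ => int1 (hmax i j k)
  have eG : ∀ i : Fin n, (∫ q : Fin d → ℝ,
      ∏ k, (Icc (0:ℝ) 1).indicator (fun t => t * gg (x i k) t) (q k))
      = (∏ k, (1 - x i k ^ 2)) / 2 ^ d := by
    intro i
    rw [integral_fintype_prod_volume_eq_prod (ι := Fin d)
      (f := fun k => (Icc (0:ℝ) 1).indicator (fun t => t * gg (x i k) t))]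
    rw [show (∏ k, (1 - x i k ^ 2)) / 2 ^ d = ∏ k : Fin d, (1 - x i k ^ 2) / 2 by
      rw [Finset.prod_div_distrib, Finset.prod_const]; simp]
    exact Finset.prod_congr rfl fun k _ => int2 (hx i k)
  have eH : (∫ q : Fin d → ℝ, ∏ k, (Icc (0:ℝ) 1).indicator (fun t : ℝ => t ^ 2) (q k))
      = 1 / 3 ^ d := by
    rw [integral_fintype_prod_volume_eq_prod (ι := Fin d)
      (f := fun _ => (Icc (0:ℝ) 1).indicator (fun t : ℝ => t ^ 2))]
    simp [int3, one_div, inv_pow]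
  simp_rw [eF, eG, eH]
  have h2 : (2:ℝ) ^ ((1:ℤ) - d) = 2 / 2 ^ d := by
    rw [zpow_sub₀ (two_ne_zero), zpow_one, zpow_natCast]
  rw [h2]
  have hn0 : (n:ℝ) ≠ 0 := Nat.cast_ne_zero.mpr (by omega)
  have h2d : (2:ℝ) ^ d ≠ 0 := by positivity
  rw [← Finset.sum_div]
  ring
end

section
/- (Niederreiter's optimal one-dimensional point set, value.) For every n ≥ 1, the point set P_n := ((2i+1)/(2n))_{i=0}^{n-1} in [0,1) has L∞ star discrepancy exactly d∞*(P_n) = 1/(2n). -/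
theorem cardlem (n k : ℕ) : (Finset.univ.filter fun i : Fin n => (i:ℕ) < k).card = min k n := by
  rw [← Finset.card_image_of_injective (Finset.univ.filter fun i : Fin n => (i:ℕ) < k) Fin.val_injective]
  have h1 : Finset.image Fin.val (Finset.univ.filter fun i : Fin n => (i:ℕ) < k)
      = Finset.range (min k n) := by
    ext x
    simp only [Finset.mem_image, Finset.mem_filter, Finset.mem_univ, true_and,
      Finset.mem_range, Nat.lt_min]
    constructor
    · rintro ⟨i, hi, rfl⟩; exact ⟨hi, i.isLt⟩
    · rintro ⟨hk, hx⟩; exact ⟨⟨x, hx⟩, hk, rfl⟩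
  rw [h1, Finset.card_range]

theorem boundlem (n : ℕ) (hn : 1 ≤ n) (q : ℝ) (hq : q ∈ Set.Ioc (0:ℝ) 1) :
    |((Finset.univ.filter fun i : Fin n => (2 * ((i : ℕ) : ℝ) + 1) / (2 * n) < q).card : ℝ) / n - q|
      ≤ 1 / (2 * n) := by
  have hn0 : (0:ℝ) < n := by exact_mod_cast hn
  have h2n : (0:ℝ) < 2 * n := by linarith
  obtain ⟨c, hc⟩ : ∃ c : ℝ, c = n * q - 1/2 := ⟨_, rfl⟩
  have hfil : (Finset.univ.filter fun i : Fin n => (2 * ((i : ℕ) : ℝ) + 1) / (2 * n) < q)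
      = (Finset.univ.filter fun i : Fin n => (i:ℕ) < ⌈c⌉₊) := by
    apply Finset.filter_congr
    intro i _
    rw [div_lt_iff₀ h2n, Nat.lt_ceil]
    constructor <;> intro h <;> linarith
  have hcn : c ≤ n := by nlinarith [hq.2]
  have hkn : ⌈c⌉₊ ≤ n := Nat.ceil_le.2 hcn
  have hmin : min ⌈c⌉₊ n = ⌈c⌉₊ := min_eq_left hkn
  rw [hfil, cardlem, hmin]
  have hk1 : c ≤ (⌈c⌉₊:ℝ) := Nat.le_ceil c
  have hk2 : (⌈c⌉₊:ℝ) ≤ c + 1 := by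
    rcases le_or_gt c 0 with h | h
    · rw [Nat.ceil_eq_zero.2 h]
      have : 0 < n * q := mul_pos hn0 hq.1
      push_cast
      linarith
    · linarith [Nat.ceil_lt_add_one h.le]
  have key : |(⌈c⌉₊:ℝ) - n * q| ≤ 1/2 := by
    rw [abs_le]; constructor <;> linarith
  have heq : (⌈c⌉₊:ℝ)/n - q = ((⌈c⌉₊:ℝ) - n*q)/n := by field_simp
  have heq2 : (1:ℝ)/(2*n) = (1/2)/n := by ring
  rw [heq, heq2, abs_div, abs_of_pos hn0]
  gcongr

/-- The L∞ star discrepancy of a list of `n` points of `[0,1)`: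
`sup_{q ∈ (0,1]} |#{i : xᵢ < q}/n − q|`. -/
noncomputable def dinf (n : ℕ) (P : Fin n → ℝ) : ℝ :=
  sSup ((fun q : ℝ => |((Finset.univ.filter fun i => P i < q).card : ℝ) / n - q|) ''
    Set.Ioc (0 : ℝ) 1)

/-- Niederreiter's optimal one-dimensional point set: the point set
`((2i+1)/(2n))_{i=0}^{n-1}` has L∞ star discrepancy exactly `1/(2n)`. -/
theorem niederreiter_set_discrepancy (n : ℕ) (hn : 1 ≤ n) :
    dinf n (fun i : Fin n => (2 * ((i : ℕ) : ℝ) + 1) / (2 * n)) = 1 / (2 * n) := by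
  have hn0 : (0:ℝ) < n := by exact_mod_cast hn
  have h2n : (0:ℝ) < 2 * n := by linarith
  have hmem : (1:ℝ)/(2*n) ∈ Set.Ioc (0:ℝ) 1 := by
    constructor
    · positivity
    · rw [div_le_one h2n]
      have : (1:ℝ) ≤ n := by exact_mod_cast hn
      linarith
  have hval : |((Finset.univ.filter fun i : Fin n =>
      (2 * ((i : ℕ) : ℝ) + 1) / (2 * n) < 1/(2*n)).card : ℝ) / n - 1/(2*n)| = 1/(2*n) := by
    have hempty : (Finset.univ.filter fun i : Fin n =>
        (2 * ((i : ℕ) : ℝ) + 1) / (2 * n) < 1/(2*n)) = ∅ := by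
      apply Finset.filter_false_of_mem
      intro i _
      rw [not_lt]
      gcongr
      have : (0:ℝ) ≤ ((i:ℕ):ℝ) := Nat.cast_nonneg _
      linarith
    rw [hempty]
    simp only [Finset.card_empty, Nat.cast_zero, zero_div, zero_sub, abs_neg]
    exact abs_of_pos (by positivity)
  unfold dinf
  apply le_antisymm
  · apply Real.sSup_le
    · rintro x ⟨q, hq, rfl⟩
      exact boundlem n hn q hq
    · positivity
  · apply le_csSup
    · exact ⟨1/(2*n), by rintro x ⟨q, hq, rfl⟩; exact boundlem n hn q hq⟩
    · exact ⟨1/(2*n), hmem, hval⟩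
end

section
/- (Niederreiter's optimal one-dimensional point set, optimality.) For every n ≥ 1 and every finite list P = (x_1, …, x_n) of n points in [0,1), the L∞ star discrepancy satisfies d∞*(P) ≥ 1/(2n). -/
/-- Optimality of Niederreiter's construction: every list of `n` points of `[0,1)`
has L∞ star discrepancy at least `1/(2n)`. -/
theorem discrepancy_lower_bound (n : ℕ) (hn : 1 ≤ n) (P : Fin n → ℝ)
    (hP : ∀ i, P i ∈ Set.Ico (0 : ℝ) 1) :
    1 / (2 * (n : ℝ)) ≤ dinf n P := by
  have hn0 : (0 : ℝ) < n := by exact_mod_cast Nat.lt_of_lt_of_le Nat.zero_lt_one hn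
  set f : ℝ → ℝ := fun q => |((Finset.univ.filter fun i => P i < q).card : ℝ) / n - q|
    with hf
  have hbdd : BddAbove (f '' Set.Ioc (0 : ℝ) 1) := by
    refine ⟨2, ?_⟩
    rintro _ ⟨q, hq, rfl⟩
    have h1 : ((Finset.univ.filter fun i => P i < q).card : ℝ) ≤ n := by
      exact_mod_cast (Finset.card_filter_le Finset.univ _).trans_eq (Finset.card_univ.trans
        (Fintype.card_fin n))
    have h2 : ((Finset.univ.filter fun i => P i < q).card : ℝ) / n ≤ 1 := by
      rw [div_le_one hn0]; exact h1
    have h3 : (0 : ℝ) ≤ ((Finset.univ.filter fun i => P i < q).card : ℝ) / n := by positivity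
    simp only [f]
    rw [abs_le]
    constructor <;> nlinarith [hq.1, hq.2]
  have hle : ∀ q ∈ Set.Ioc (0 : ℝ) 1, f q ≤ dinf n P := fun q hq =>
    le_csSup hbdd ⟨q, hq, rfl⟩
  -- i₀ : index of minimal point
  haveI : Nonempty (Fin n) := ⟨⟨0, hn⟩⟩
  obtain ⟨i₀, -, hi₀⟩ := Finset.exists_min_image Finset.univ P ⟨Classical.arbitrary _,
    Finset.mem_univ _⟩
  set m := P i₀ with hm
  have hm0 : 0 ≤ m := (hP i₀).1
  have hm1 : m < 1 := (hP i₀).2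
  by_cases hcase : 1 / (2 * (n : ℝ)) ≤ m
  · -- take q = m
    have hq : m ∈ Set.Ioc (0 : ℝ) 1 := ⟨lt_of_lt_of_le (by positivity) hcase, hm1.le⟩
    have hempty : (Finset.univ.filter fun i => P i < m) = ∅ := by
      refine Finset.filter_false_of_mem fun i _ => not_lt.2 (hi₀ i (Finset.mem_univ i))
    have : f m = m := by
      simp [f, hempty, abs_of_nonpos, hm0, abs_of_nonneg]
    calc 1 / (2 * (n : ℝ)) ≤ m := hcase
      _ = f m := this.symm
      _ ≤ dinf n P := hle m hq
  · -- take q = 1/(2n)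
    push_neg at hcase
    set q : ℝ := 1 / (2 * (n : ℝ)) with hqdef
    have hq0 : 0 < q := by positivity
    have hq1 : q ≤ 1 := by
      rw [hqdef, div_le_one (by positivity)]
      have : (1:ℝ) ≤ n := by exact_mod_cast hn
      linarith
    have hqmem : q ∈ Set.Ioc (0 : ℝ) 1 := ⟨hq0, hq1⟩
    have hcard : 1 ≤ ((Finset.univ.filter fun i => P i < q).card : ℝ) := by
      have : i₀ ∈ Finset.univ.filter fun i => P i < q := by
        simp only [Finset.mem_filter, Finset.mem_univ, true_and]
        exact hcase
      exact_mod_cast Finset.card_pos.2 ⟨i₀, this⟩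
    have hfq : q ≤ f q := by
      have h1n : 1 / (n : ℝ) ≤ ((Finset.univ.filter fun i => P i < q).card : ℝ) / n := by
        gcongr
      have hsum : q + q = 1 / (n : ℝ) := by
        rw [hqdef]; field_simp; ring_nf
      have : q ≤ ((Finset.univ.filter fun i => P i < q).card : ℝ) / n - q := by
        linarith
      exact this.trans (le_abs_self _)
    exact hfq.trans (hle q hqmem)
end
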